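/- Let C be a Grothendieck category and L₁, L₂ stable localizing subcategories with L₁ ∩ L₂ = 0. Then for every object X of C, t_{L₁∨L₂}(X) = t_{L₁}(X) ⊕ t_{L₂}(X), and t_{L₁}(t_{L₂}(X)) = 0 = t_{L₂}(t_{L₁}(X)). -/

import Mathlib

open CategoryTheory Limits

universe w v u u₂ u₃ u₄ u₅

namespace CentralSheaf

variable {C : Type u} [Category.{v} C] [Abelian C]

/-- A monomorphism is essential if every morphism whose precomposition with it
is a monomorphism is itself a monomorphism. -/
def IsEssentialMono {X Y : C} (f : X ⟶ Y) : Prop :=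
  Mono f ∧ ∀ ⦃Z : C⦄ (g : Y ⟶ Z), Mono (f ≫ g) → Mono g

/-- A Serre subcategory of an abelian category, given as a predicate on objects:
it contains the zero objects and is closed under isomorphisms, subobjects,
quotient objects and extensions. -/
structure IsSerre (P : C → Prop) : Prop where
  zero : ∀ X : C, IsZero X → P X
  iso : ∀ {X Y : C}, (X ≅ Y) → P X → P Y
  sub : ∀ {X Y : C} (f : X ⟶ Y), Mono f → P Y → P X
  quot : ∀ {X Y : C} (f : X ⟶ Y), Epi f → P X → P Y
  ext : ∀ S : ShortComplex C, S.ShortExact → P S.X₁ → P S.X₃ → P S.X₂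

/-- A localizing subcategory: a Serre subcategory closed under arbitrary direct sums. -/
structure IsLocalizing (P : C → Prop) extends IsSerre P : Prop where
  sums : ∀ {ι : Type v} (X : ι → C) (c : Cofan X), IsColimit c → (∀ i, P (X i)) → P c.pt

/-- Stability: closure under essential extensions. -/
def IsStable (P : C → Prop) : Prop :=
  ∀ {X Y : C} (f : X ⟶ Y), IsEssentialMono f → P X → P Y

/-- A stable localizing subcategory. -/
structure IsStableLocalizing (P : C → Prop) extends IsLocalizing P : Prop where
  stable : IsStable P

/-- Data exhibiting `D` as the Gabriel quotient `C/P` of `C` by the localizing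
subcategory `P`: an exact quotient functor `T` with fully faithful right adjoint
(section functor) `S`, whose kernel is exactly `P`. -/
structure QuotientData (P : C → Prop) (D : Type u₂) [Category.{v} D] [Abelian D] where
  T : C ⥤ D
  S : D ⥤ C
  adj : T ⊣ S
  additive : T.Additive
  preservesFiniteLimits : PreservesFiniteLimits T
  fullS : S.Full
  faithfulS : S.Faithful
  ker : ∀ X : C, P X ↔ IsZero (T.obj X)

/-- `t` is the `P`-torsion subobject of its ambient object: it lies in `P` and
contains every subobject lying in `P`. -/
def IsTorsionSubobject (P : C → Prop) {X : C} (t : Subobject X) : Prop :=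
  P ((t : C)) ∧ ∀ s : Subobject X, P ((s : C)) → s ≤ t

/-- `P₃` is the smallest localizing subcategory containing `P₁` and `P₂`. -/
def IsJoin (P₁ P₂ P₃ : C → Prop) : Prop :=
  IsLocalizing P₃ ∧ (∀ X, P₁ X → P₃ X) ∧ (∀ X, P₂ X → P₃ X) ∧
    ∀ Q : C → Prop, IsLocalizing Q → (∀ X, P₁ X → Q X) → (∀ X, P₂ X → Q X) →
      ∀ X, P₃ X → Q X

/-- An object is noetherian if its subobjects satisfy the ascending chain condition. -/
def IsNoetherianObject (X : C) : Prop := WellFoundedGT (Subobject X)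

/-- A Grothendieck category is locally noetherian if it has a (separating) set of
noetherian generators. -/
def IsLocallyNoetherian (C : Type u) [Category.{v} C] [Abelian C] : Prop :=
  ∃ 𝒢 : Set C, ObjectProperty.IsSeparating (fun G : C => G ∈ 𝒢) ∧ ∀ G ∈ 𝒢, IsNoetherianObject G

/-!
Let `𝓔(P₁, P₂)` be the class of objects `Y` with a subobject `Z ∈ P₁` such that `Y / Z ∈ P₂`.
Stability makes it symmetric: `Z` meets `t₂(Y)` trivially, so it embeds into `Y' = Y / t₂(Y)`;
the kernel of a map out of `Y'` that is injective on `Z` embeds into `Y' / Z`, a quotient of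
`Y / Z`, so it lies in `P₂` and vanishes because `Y'` has no nonzero `P₂`-subobjects. Thus `Y'` is
an essential extension of `Z`, whence `Y' ∈ P₁`. Symmetry gives closure of `𝓔(P₁, P₂)` under
extensions, so it is localizing and contains `L₁ ∨ L₂`. For `Y = t_{L₁∨L₂}(X)` we then get
`Y / t₁(Y) ∈ P₂` and `Y / t₂(Y) ∈ P₁`, so `Y / (t₁(Y) + t₂(Y)) ∈ P₁ ∩ P₂ = 0`.
-/

variable {P P' P₁ P₂ : C → Prop}

lemma IsSerre.isSerreClass (hP : IsSerre P) : ObjectProperty.IsSerreClass P where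
  exists_zero := ⟨_, isZero_zero C, hP.zero _ (isZero_zero C)⟩
  prop_of_mono f _ hY := hP.sub f inferInstance hY
  prop_of_epi f _ hX := hP.quot f inferInstance hX
  prop_X₂_of_shortExact hS h₁ h₃ := hP.ext _ hS h₁ h₃

lemma IsSerre.prop_cokernel_of_comp (hP : IsSerre P) {A B Y : C} (k : A ⟶ B) (g : B ⟶ Y)
    (h : P (cokernel (k ≫ g))) : P (cokernel g) :=
  hP.quot (cokernel.desc (k ≫ g) (cokernel.π g) (by simp))
    (epi_of_epi_fac (cokernel.π_desc _ _ _)) h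

lemma mono_comp_cokernel_π {A B M : C} (a : A ⟶ M) (b : B ⟶ M) [Mono a] [Mono b]
    (h : ∀ ⦃K : C⦄ (x : K ⟶ A) (y : K ⟶ B), Mono x → Mono y → x ≫ a = y ≫ b → IsZero K) :
    Mono (a ≫ cokernel.π b) := by
  apply Preadditive.mono_of_isZero_kernel
  let y := Abelian.monoLift b (kernel.ι (a ≫ cokernel.π b) ≫ a) (by simp)
  have hy : y ≫ b = kernel.ι (a ≫ cokernel.π b) ≫ a := Abelian.monoLift_comp _ _ _
  have : Mono y := mono_of_mono_fac hy
  exact h _ y inferInstance inferInstance hy.symm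

lemma Subobject.eq_bot_of_isZero {X : C} (s : Subobject X) (h : IsZero (s : C)) : s = ⊥ := by
  rw [← Subobject.mk_arrow s, Subobject.mk_eq_bot_iff_zero]
  exact h.eq_of_src _ _

lemma Subobject.eq_top_of_isZero_cokernel {X : C} (s : Subobject X)
    (h : IsZero (cokernel s.arrow)) : s = ⊤ := by
  have : Epi s.arrow := Preadditive.epi_of_isZero_cokernel _ h
  have := isIso_of_mono_of_epi s.arrow
  exact Subobject.eq_top_of_isIso_arrow s

lemma exists_isTorsionSubobject [HasColimits C] [WellPowered.{v} C] (hP : IsLocalizing P)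
    (Y : C) : ∃ t : Subobject Y, IsTorsionSubobject P t := by
  refine ⟨Subobject.sSup.{v} {s | P s}, ?_, Subobject.le_sSup _⟩
  let e : Subobject Y ≃ Shrink.{v} (Subobject Y) := equivShrink _
  let X := fun j : e '' {s | P s} => ((e.symm j : Subobject Y) : C)
  have hX : P (∐ X) := hP.sums X _ (coproductIsCoproduct X) fun j =>
    (Subobject.symm_apply_mem_iff_mem_image _ _ _).2 j.2
  exact hP.iso (Subobject.underlyingIso _).symm (hP.quot (factorThruImage _) inferInstance hX)

lemma IsTorsionSubobject.isZero_of_mono_cokernel (hP : IsSerre P) {Y : C} {t : Subobject Y}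
    (ht : IsTorsionSubobject P t) {W : C} (w : W ⟶ cokernel t.arrow) [Mono w] (hW : P W) :
    IsZero W := by
  have sq := IsPullback.of_hasPullback w (cokernel.π t.arrow)
  have hker : P (kernel (cokernel.π t.arrow)) :=
    hP.iso ((Abelian.monoIsKernelOfCokernel _ (cokernelIsCokernel t.arrow)).conePointUniqueUpToIso
      (limit.isLimit _)) ht.1
  have := isIso_kernel_map_of_isPullback sq
  have hpb : P (pullback w (cokernel.π t.arrow)) :=
    hP.ext _ (.mk' (ShortComplex.exact_of_f_is_kernel (.mk _ _ (kernel.condition _))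
        (kernelIsKernel (pullback.fst w (cokernel.π t.arrow)))) inferInstance inferInstance)
      (hP.iso (asIso (kernel.map _ _ _ _ sq.w)).symm hker) hW
  have hle := ht.2 _ (hP.iso (Subobject.underlyingIso (pullback.snd w _)).symm hpb)
  have hfst : pullback.fst w (cokernel.π t.arrow) = 0 := by
    rw [← cancel_mono w, pullback.condition, ← Subobject.ofMkLE_arrow hle, Category.assoc,
      cokernel.condition, comp_zero, zero_comp]
  exact IsZero.of_epi_eq_zero _ hfst

lemma IsStable.prop_of_mono (hP : IsStable P) (hP' : IsSerre P') {S M : C} (m : S ⟶ M) [Mono m]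
    (hS : P S) (hcok : P' (cokernel m))
    (htf : ∀ ⦃W : C⦄ (w : W ⟶ M), Mono w → P' W → IsZero W) : P M := by
  refine hP m ⟨inferInstance, fun W g hmg => Preadditive.mono_of_isZero_kernel _ ?_⟩ hS
  have : Mono (kernel.ι g ≫ cokernel.π m) := mono_comp_cokernel_π _ _ fun K x y _ _ hxy =>
    IsZero.of_mono_eq_zero y ((cancel_mono (m ≫ g)).1 (by simp [← reassoc_of% hxy]))
  exact htf (kernel.ι g) inferInstance (hP'.sub _ this hcok)

lemma IsSerre.prop_cokernel_arrow_of_le (hP : IsSerre P) {Y : C} {s t : Subobject Y} (h : s ≤ t)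
    (hs : P (cokernel s.arrow)) : P (cokernel t.arrow) :=
  hP.prop_cokernel_of_comp (Subobject.ofLE s t h) t.arrow (by rwa [Subobject.ofLE_arrow])

lemma IsTorsionSubobject.restrict (hP : IsSerre P) {X : C} {t s : Subobject X}
    (ht : IsTorsionSubobject P t) (h : t ≤ s) :
    IsTorsionSubobject P ((Subobject.subobjectOrderIso s).symm ⟨t, h⟩) := by
  refine ⟨hP.iso (Subobject.underlyingIso (Subobject.ofLE t s h)).symm ht.1, fun u hu => ?_⟩
  rw [OrderIso.le_symm_apply, ← Subtype.coe_le_coe]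
  exact ht.2 _ (hP.iso (Subobject.underlyingIso _).symm hu)

def IsExtension (P P' : C → Prop) (Y : C) : Prop :=
  ∃ (Z : C) (f : Z ⟶ Y), Mono f ∧ P Z ∧ P' (cokernel f)

namespace IsExtension

lemma of_left (h₂ : IsSerre P₂) {X : C} (hX : P₁ X) : IsExtension P₁ P₂ X :=
  ⟨X, 𝟙 X, inferInstance, hX, h₂.zero _ (isZero_cokernel_of_epi _)⟩

lemma of_right (h₁ : IsSerre P₁) (h₂ : IsSerre P₂) {X : C} (hX : P₂ X) : IsExtension P₁ P₂ X :=
  ⟨_, 0, (isZero_zero C).mono _, h₁.zero _ (isZero_zero C),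
    h₂.iso cokernelZeroIsoTarget.symm hX⟩

lemma of_mono_of_cokernel (h₂ : IsSerre P₂) {X Y : C} (i : X ⟶ Y) [Mono i]
    (hi : P₂ (cokernel i)) : IsExtension P₁ P₂ X → IsExtension P₁ P₂ Y := by
  rintro ⟨Z, f, _, hZ, hc⟩
  have := h₂.isSerreClass
  exact ⟨Z, f ≫ i, inferInstance, hZ, (ObjectProperty.epiModSerre P₂).comp_mem f i hc hi⟩

lemma of_iso (h₂ : IsSerre P₂) {X Y : C} (e : X ≅ Y) :
    IsExtension P₁ P₂ X → IsExtension P₁ P₂ Y :=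
  of_mono_of_cokernel h₂ e.hom (h₂.zero _ (isZero_cokernel_of_epi e.hom))

lemma of_mono (h₁ : IsSerre P₁) (h₂ : IsSerre P₂) {X Y : C} (m : X ⟶ Y) [Mono m] :
    IsExtension P₁ P₂ Y → IsExtension P₁ P₂ X := by
  rintro ⟨Z, f, _, hZ, hc⟩
  have := h₂.isSerreClass
  exact ⟨pullback f m, pullback.snd f m, inferInstance, h₁.sub (pullback.fst f m) inferInstance hZ,
    (ObjectProperty.epiModSerre P₂).of_isPullback (IsPullback.of_hasPullback f m) hc⟩

lemma of_epi (h₁ : IsSerre P₁) (h₂ : IsSerre P₂) {X Y : C} (q : X ⟶ Y) [Epi q] :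
    IsExtension P₁ P₂ X → IsExtension P₁ P₂ Y := by
  rintro ⟨Z, f, _, hZ, hc⟩
  have := h₂.isSerreClass
  have hfq : P₂ (cokernel (f ≫ q)) := (ObjectProperty.epiModSerre P₂).comp_mem f q hc
    (ObjectProperty.epiModSerre_of_epi P₂ q)
  refine ⟨Abelian.image (f ≫ q), Abelian.image.ι (f ≫ q), inferInstance,
    h₁.quot (Abelian.factorThruImage _) inferInstance hZ, ?_⟩
  exact h₂.prop_cokernel_of_comp (Abelian.factorThruImage _) _ (by rwa [Abelian.image.fac])

lemma symm [HasColimits C] [WellPowered.{v} C] (h₁ : IsSerre P₁) (hs₁ : IsStable P₁)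
    (h₂ : IsLocalizing P₂) (hdisj : ∀ X : C, P₁ X → P₂ X → IsZero X) {Y : C} :
    IsExtension P₁ P₂ Y → IsExtension P₂ P₁ Y := by
  rintro ⟨Z, f, _, hZ, hc⟩
  obtain ⟨t, ht⟩ := exists_isTorsionSubobject h₂ Y
  have := h₂.isSerreClass
  have : Mono (f ≫ cokernel.π t.arrow) := mono_comp_cokernel_π _ _ fun K x y _ _ _ =>
    hdisj K (h₁.sub x ‹_› hZ) (h₂.sub y ‹_› ht.1)
  have hcok : P₂ (cokernel (f ≫ cokernel.π t.arrow)) :=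
    (ObjectProperty.epiModSerre P₂).comp_mem _ _ hc (ObjectProperty.epiModSerre_of_epi P₂ _)
  exact ⟨t, t.arrow, inferInstance, ht.1, hs₁.prop_of_mono h₂.toIsSerre _ hZ hcok
    fun _ w _ hW => ht.isZero_of_mono_cokernel h₂.toIsSerre w hW⟩

lemma of_shortExact [HasColimits C] [WellPowered.{v} C] (h₁ : IsStableLocalizing P₁)
    (h₂ : IsStableLocalizing P₂) (hdisj : ∀ X : C, P₁ X → P₂ X → IsZero X)
    {S : ShortComplex C} (hS : S.ShortExact) (hX₁ : IsExtension P₁ P₂ S.X₁)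
    (hX₃ : IsExtension P₁ P₂ S.X₃) : IsExtension P₁ P₂ S.X₂ := by
  -- By symmetry `X₃` has a subobject `W ∈ P₂` with quotient in `P₁`; the preimage of `W` in `X₂`
  -- is an extension of `W` by `X₁`, and its quotient is `X₃ / W`.
  obtain ⟨W, w, _, hW, hc⟩ := hX₃.symm h₁.toIsSerre h₁.stable h₂.toIsLocalizing hdisj
  have := hS.epi_g
  have := h₁.isSerreClass
  have sq := IsPullback.of_hasPullback w S.g
  have := isIso_kernel_map_of_isPullback sq
  have hK : IsExtension P₁ P₂ (kernel (pullback.fst w S.g)) :=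
    hX₁.of_iso h₂.toIsSerre (asIso (kernel.map _ _ _ _ sq.w) ≪≫
      (kernelIsKernel S.g).conePointUniqueUpToIso hS.fIsKernel).symm
  have hE : IsExtension P₁ P₂ (pullback w S.g) := hK.of_mono_of_cokernel h₂.toIsSerre _
    (h₂.sub _ (ShortComplex.exact_of_f_is_kernel (.mk _ _ (kernel.condition _))
      (kernelIsKernel (pullback.fst w S.g))).mono_cokernelDesc hW)
  exact ((hE.symm h₁.toIsSerre h₁.stable h₂.toIsLocalizing hdisj).of_mono_of_cokernel
    h₁.toIsSerre (pullback.snd w S.g)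
    ((ObjectProperty.epiModSerre P₁).of_isPullback sq hc)).symm h₂.toIsSerre h₂.stable
    h₁.toIsLocalizing fun X h h' => hdisj X h' h

lemma of_isColimit_cofan [HasColimits C] [AB5 C] (h₁ : IsLocalizing P₁) (h₂ : IsLocalizing P₂)
    {ι : Type v} (X : ι → C) (c : Cofan X) (hc : IsColimit c)
    (hX : ∀ i, IsExtension P₁ P₂ (X i)) : IsExtension P₁ P₂ c.pt := by
  choose Z f hf hZ hcok using hX
  have : HasFiniteBiproducts C := .of_hasFiniteProducts
  have := AB4.of_AB5 C
  refine of_iso h₂.toIsSerre ((coproductIsCoproduct X).coconePointUniqueUpToIso hc)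
    ⟨∐ Z, Limits.Sigma.map f, inferInstance, h₁.sums Z _ (coproductIsCoproduct Z) hZ, ?_⟩
  let ψ : ∐ (fun i => cokernel (f i)) ⟶ cokernel (Limits.Sigma.map f) :=
    Sigma.desc fun i => cokernel.desc (f i) (Sigma.ι X i ≫ cokernel.π _) (by
      rw [← Category.assoc, ← Sigma.ι_map, Category.assoc, cokernel.condition, comp_zero])
  have hψ : Limits.Sigma.map (fun i => cokernel.π (f i)) ≫ ψ =
      cokernel.π (Limits.Sigma.map f) := by
    ext; simp [ψ]
  exact h₂.quot ψ (epi_of_epi_fac hψ) (h₂.sums _ _ (coproductIsCoproduct _) hcok)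

end IsExtension

lemma isLocalizing_isExtension [HasColimits C] [AB5 C] [WellPowered.{v} C]
    (h₁ : IsStableLocalizing P₁) (h₂ : IsStableLocalizing P₂)
    (hdisj : ∀ X : C, P₁ X → P₂ X → IsZero X) : IsLocalizing (IsExtension P₁ P₂) where
  zero X hX := .of_left h₂.toIsSerre (h₁.zero X hX)
  iso e := .of_iso h₂.toIsSerre e
  sub f _ := .of_mono h₁.toIsSerre h₂.toIsSerre f
  quot f _ := .of_epi h₁.toIsSerre h₂.toIsSerre f
  ext _ hS := .of_shortExact h₁ h₂ hdisj hS
  sums X c hc := .of_isColimit_cofan h₁.toIsLocalizing h₂.toIsLocalizing X c hc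

lemma IsTorsionSubobject.prop_cokernel_arrow (h₁ : IsSerre P₁)
    (h₂ : IsSerre P₂) {Y : C} (hY : IsExtension P₁ P₂ Y) {t : Subobject Y}
    (ht : IsTorsionSubobject P₁ t) : P₂ (cokernel t.arrow) := by
  obtain ⟨Z, f, _, hZ, hc⟩ := hY
  have hle : Subobject.mk f ≤ t := ht.2 _ (h₁.iso (Subobject.underlyingIso f).symm hZ)
  exact h₂.prop_cokernel_of_comp (Subobject.ofMkLE f t hle) t.arrow
    (by rwa [Subobject.ofMkLE_arrow])

lemma sup_eq_top_of_isExtension (h₁ : IsSerre P₁) (h₂ : IsSerre P₂)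
    (hdisj : ∀ X : C, P₁ X → P₂ X → IsZero X) {Y : C} (hY₁₂ : IsExtension P₁ P₂ Y)
    (hY₂₁ : IsExtension P₂ P₁ Y) {t₁ t₂ : Subobject Y} (ht₁ : IsTorsionSubobject P₁ t₁)
    (ht₂ : IsTorsionSubobject P₂ t₂) : t₁ ⊔ t₂ = ⊤ :=
  Subobject.eq_top_of_isZero_cokernel _ <| hdisj _
    (h₁.prop_cokernel_arrow_of_le le_sup_right (ht₂.prop_cokernel_arrow h₂ h₁ hY₂₁))
    (h₂.prop_cokernel_arrow_of_le le_sup_left (ht₁.prop_cokernel_arrow h₁ h₂ hY₁₂))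

/-- If `L₁`, `L₂` are stable localizing subcategories of a
Grothendieck category with `L₁ ∩ L₂ = 0`, then for every object `X` we have
`t_{L₁∨L₂}(X) = t_{L₁}(X) ⊕ t_{L₂}(X)` (an internal direct sum of subobjects),
and `t_{L₁}(t_{L₂}(X)) = 0 = t_{L₂}(t_{L₁}(X))`. -/
theorem torsion_of_join
    [HasColimits C] [AB5 C] (hsep : ∃ G : C, IsSeparator G)
    (P₁ P₂ P₃ : C → Prop) (h₁ : IsStableLocalizing P₁) (h₂ : IsStableLocalizing P₂)
    (hdisj : ∀ X : C, P₁ X → P₂ X → IsZero X)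
    (hjoin : IsJoin P₁ P₂ P₃)
    (X : C) (t₁ t₂ t₃ : Subobject X)
    (ht₁ : IsTorsionSubobject P₁ t₁) (ht₂ : IsTorsionSubobject P₂ t₂)
    (ht₃ : IsTorsionSubobject P₃ t₃)
    (s₁ : Subobject ((t₂ : C))) (hs₁ : IsTorsionSubobject P₁ s₁)
    (s₂ : Subobject ((t₁ : C))) (hs₂ : IsTorsionSubobject P₂ s₂) :
    t₃ = t₁ ⊔ t₂ ∧ t₁ ⊓ t₂ = ⊥ ∧ IsZero ((s₁ : C)) ∧ IsZero ((s₂ : C)) := by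
  obtain ⟨G, hG⟩ := hsep
  have : WellPowered.{v} C := wellPowered_of_isDetector G hG.isDetector
  have hext : IsExtension P₁ P₂ t₃ := hjoin.2.2.2 _ (isLocalizing_isExtension h₁ h₂ hdisj)
    (fun _ => .of_left h₂.toIsSerre) (fun _ => .of_right h₁.toIsSerre h₂.toIsSerre) _ ht₃.1
  have h₁₃ : t₁ ≤ t₃ := ht₃.2 t₁ (hjoin.2.1 _ ht₁.1)
  have h₂₃ : t₂ ≤ t₃ := ht₃.2 t₂ (hjoin.2.2.1 _ ht₂.1)
  have hsup := sup_eq_top_of_isExtension h₁.toIsSerre h₂.toIsSerre hdisj hext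
    (hext.symm h₁.toIsSerre h₁.stable h₂.toIsLocalizing hdisj)
    (ht₁.restrict h₁.toIsSerre h₁₃) (ht₂.restrict h₂.toIsSerre h₂₃)
  refine ⟨?_, ?_, hdisj _ hs₁.1 (h₂.sub s₁.arrow inferInstance ht₂.1),
    hdisj _ (h₁.sub s₂.arrow inferInstance ht₁.1) hs₂.1⟩
  · simpa [← map_sup, eq_comm] using
      congrArg (fun v => (Subobject.subobjectOrderIso t₃ v).1) hsup
  · exact Subobject.eq_bot_of_isZero _ <| hdisj _
      (h₁.sub (Subobject.ofLE _ _ inf_le_left) inferInstance ht₁.1)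
      (h₂.sub (Subobject.ofLE _ _ inf_le_right) inferInstance ht₂.1)

end CentralSheaf
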